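/- If B ⊆ Σⁿ is (1,1)-guaranteed, then B is (r,r)-guaranteed for every integer r ≥ 1. -/

import Mathlib

/-- Costs of the edit operations (as in the former Mathlib `Levenshtein.Cost`). -/
structure Levenshtein.Cost (α β δ : Type*) where
  delete : α → δ
  insert : β → δ
  substitute : α → β → δ

/-- Unit costs (as in the former Mathlib `Levenshtein.defaultCost`). -/
def Levenshtein.defaultCost {α : Type*} [DecidableEq α] : Levenshtein.Cost α α ℕ where
  delete _ := 1
  insert _ := 1
  substitute a b := if a = b then 0 else 1

/-- Levenshtein distance with costs `C` (the recursion characterizing the former Mathlib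
`levenshtein`). -/
def levenshtein {α β δ : Type*} [Zero δ] [Add δ] [Min δ] (C : Levenshtein.Cost α β δ) :
    List α → List β → δ
  | [], [] => 0
  | [], y :: ys => C.insert y + levenshtein C [] ys
  | x :: xs, [] => C.delete x + levenshtein C xs []
  | x :: xs, y :: ys =>
    min (C.delete x + levenshtein C xs (y :: ys))
      (min (C.insert y + levenshtein C (x :: xs) ys) (C.substitute x y + levenshtein C xs ys))

/-- Edit (Levenshtein) distance between two length-`n` sequences over `α`. -/
def editDist {α : Type*} [DecidableEq α] {n : ℕ} (s t : Fin n → α) : ℕ :=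
  levenshtein Levenshtein.defaultCost (List.ofFn s) (List.ofFn t)

/-- `B` is a `(d, r)`-guaranteed subset of `Σⁿ`: for every pair of sequences within
edit distance `d`, some sequence of `B` lies in both of their `r`-neighborhoods. -/
def IsGuaranteed {α : Type*} [DecidableEq α] {n : ℕ} (d r : ℕ)
    (B : Set (Fin n → α)) : Prop :=
  ∀ s t : Fin n → α, editDist s t ≤ d →
    ∃ v ∈ B, editDist s v ≤ r ∧ editDist t v ≤ r


/-! If `s ≠ t`, an optimal alignment of `s` with `t` deletes or substitutes some symbol of `s`, so
rewriting that position of `s` arbitrarily does not increase its distance to `t`. Since `|Σ| > 1`,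
the `(1,1)`-guarantee applied to `s` and a one-letter change of `s` at that position yields `v ∈ B`
within distance `1` of both; two words of equal length at edit distance `≤ 1` differ in at most one
position, so `v` agrees with `s` off that position. Hence `d(s,v) ≤ 1 ≤ r` and
`d(t,v) ≤ d(t,s) ≤ r`. -/

section DefaultCost

variable {α : Type*} [DecidableEq α]

local notation "lev" => levenshtein (Levenshtein.defaultCost (α := α))

@[simp]
theorem levenshtein_nil_nil : lev [] [] = 0 :=
  levenshtein.eq_1 _

@[simp]
theorem levenshtein_nil_cons (y : α) (ys : List α) : lev [] (y :: ys) = 1 + lev [] ys :=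
  levenshtein.eq_2 ..

@[simp]
theorem levenshtein_cons_nil (x : α) (xs : List α) : lev (x :: xs) [] = 1 + lev xs [] :=
  levenshtein.eq_3 ..

theorem levenshtein_cons_cons (x y : α) (xs ys : List α) :
    lev (x :: xs) (y :: ys) =
      min (1 + lev xs (y :: ys)) (min (1 + lev (x :: xs) ys) ((if x = y then 0 else 1) + lev xs ys)) :=
  levenshtein.eq_4 ..

@[simp]
theorem levenshtein_nil_left (ys : List α) : lev [] ys = ys.length := by
  induction ys with
  | nil => simp
  | cons y ys ih => simp [ih, Nat.add_comm]

@[simp]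
theorem levenshtein_nil_right (xs : List α) : lev xs [] = xs.length := by
  induction xs with
  | nil => simp
  | cons x xs ih => simp [ih, Nat.add_comm]

@[simp]
theorem levenshtein_self (xs : List α) : lev xs xs = 0 := by
  induction xs with
  | nil => simp
  | cons x xs ih => simp [levenshtein_cons_cons, ih]

theorem levenshtein_comm (xs ys : List α) : lev xs ys = lev ys xs := by
  induction xs generalizing ys with
  | nil => simp
  | cons x xs ihx =>
    induction ys with
    | nil => simp
    | cons y ys ihy =>
      simp only [levenshtein_cons_cons, ihx, ihy, eq_comm (a := x)]
      omega

theorem length_le_levenshtein_add (xs ys : List α) : xs.length ≤ lev xs ys + ys.length := by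
  induction xs generalizing ys with
  | nil => simp
  | cons x xs ihx =>
    induction ys with
    | nil => simp
    | cons y ys ihy =>
      have := ihx (y :: ys)
      have := ihx ys
      simp only [levenshtein_cons_cons, List.length_cons] at *
      split_ifs <;> omega

theorem levenshtein_eq_zero_iff {xs ys : List α} : lev xs ys = 0 ↔ xs = ys := by
  refine ⟨fun h => ?_, fun h => h ▸ levenshtein_self xs⟩
  induction xs generalizing ys with
  | nil => simpa [eq_comm] using h
  | cons x xs ih =>
    cases ys with
    | nil => simp at h
    | cons y ys =>
      simp only [levenshtein_cons_cons] at h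
      split_ifs at h with hxy
      · rw [hxy, ih (ys := ys) (by omega)]
      · omega

theorem levenshtein_cons_left_le (x : α) (xs ys : List α) : lev (x :: xs) ys ≤ 1 + lev xs ys := by
  cases ys with
  | nil => simp [Nat.add_comm]
  | cons y ys => rw [levenshtein_cons_cons]; omega

theorem levenshtein_cons_right_le (xs : List α) (y : α) (ys : List α) :
    lev xs (y :: ys) ≤ 1 + lev xs ys := by
  cases xs with
  | nil => simp [Nat.add_comm]
  | cons x xs => rw [levenshtein_cons_cons]; omega

theorem levenshtein_cons_cons_le (x y : α) (xs ys : List α) :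
    lev (x :: xs) (y :: ys) ≤ (if x = y then 0 else 1) + lev xs ys := by
  rw [levenshtein_cons_cons]; omega

theorem levenshtein_set_le_one (xs : List α) (i : ℕ) (c : α) : lev xs (xs.set i c) ≤ 1 := by
  induction xs generalizing i with
  | nil => simp
  | cons x xs ih =>
    cases i with
    | zero => exact (levenshtein_cons_cons_le x c xs xs).trans (by split_ifs <;> simp)
    | succ i => simpa using (levenshtein_cons_cons_le x x xs (xs.set i c)).trans (by simpa using ih i)

theorem eq_or_eq_set_of_levenshtein_le_one {xs ys : List α} (hlen : xs.length = ys.length)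
    (h : lev xs ys ≤ 1) : xs = ys ∨ ∃ i c, ys = xs.set i c := by
  induction xs generalizing ys with
  | nil => simp_all [eq_comm]
  | cons x xs ih =>
    cases ys with
    | nil => simp at hlen
    | cons y ys =>
      have hdel := length_le_levenshtein_add (y :: ys) xs
      have hins := length_le_levenshtein_add (x :: xs) ys
      rw [levenshtein_comm] at hdel
      simp only [List.length_cons] at hlen hdel hins
      rw [levenshtein_cons_cons] at h
      split_ifs at h with hxy
      · subst hxy
        rcases ih (ys := ys) (by omega) (by omega) with rfl | ⟨i, c, rfl⟩
        · exact .inl rfl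
        · exact .inr ⟨i + 1, c, rfl⟩
      · obtain rfl : xs = ys := levenshtein_eq_zero_iff.mp (by omega)
        exact .inr ⟨0, y, rfl⟩

theorem levenshtein_cons_cons_cases (x y : α) (xs ys : List α) :
    lev (x :: xs) (y :: ys) = 1 + lev xs (y :: ys) ∨ lev (x :: xs) (y :: ys) = 1 + lev (x :: xs) ys ∨
      lev (x :: xs) (y :: ys) = (if x = y then 0 else 1) + lev xs ys := by
  rw [levenshtein_cons_cons]
  omega

theorem exists_forall_levenshtein_set_le {xs ys : List α} (hlen : ys.length ≤ xs.length)
    (h : lev xs ys ≠ 0) : ∃ i < xs.length, ∀ c, lev (xs.set i c) ys ≤ lev xs ys := by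
  induction ys generalizing xs with
  | nil =>
    cases xs with
    | nil => simp at h
    | cons x xs => exact ⟨0, by simp, fun c => by simp⟩
  | cons y ys ih =>
    cases xs with
    | nil => simp at hlen
    | cons x xs =>
      simp only [List.length_cons] at hlen
      rcases levenshtein_cons_cons_cases x y xs ys with hd | hi | hs
      · refine ⟨0, by simp, fun c => ?_⟩
        simpa [hd] using levenshtein_cons_left_le c xs (y :: ys)
      · have hins := length_le_levenshtein_add (x :: xs) ys
        obtain ⟨i, hi_lt, hset⟩ := ih (xs := x :: xs) (by simp; omega) (by simp at hins; omega)
        refine ⟨i, hi_lt, fun c => ?_⟩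
        rw [hi]
        exact (levenshtein_cons_right_le _ y ys).trans (by simpa using hset c)
      · by_cases hxy : x = y
        · subst hxy
          rw [if_pos rfl, zero_add] at hs
          obtain ⟨i, hi, hset⟩ := ih (xs := xs) (by omega) (by omega)
          refine ⟨i + 1, by simpa using hi, fun c => ?_⟩
          simpa [hs] using (levenshtein_cons_cons_le x x (xs.set i c) ys).trans (by simpa using hset c)
        · refine ⟨0, by simp, fun c => ?_⟩
          rw [if_neg hxy] at hs
          exact hs ▸ (levenshtein_cons_cons_le c y xs ys).trans (by split_ifs <;> omega)

end DefaultCost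

theorem List.ofFn_update {α : Type*} {n : ℕ} (s : Fin n → α) (i : Fin n) (c : α) :
    List.ofFn (Function.update s i c) = (List.ofFn s).set i c := by
  refine List.ext_getElem (by simp) fun j hj _ => ?_
  simp [List.getElem_set, Function.update_apply, Fin.ext_iff, eq_comm]

section EditDist

variable {α : Type*} [DecidableEq α] {n : ℕ}

theorem editDist_comm (s t : Fin n → α) : editDist s t = editDist t s :=
  levenshtein_comm _ _

theorem editDist_self (s : Fin n → α) : editDist s s = 0 :=
  levenshtein_self _

theorem editDist_eq_zero_iff {s t : Fin n → α} : editDist s t = 0 ↔ s = t :=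
  levenshtein_eq_zero_iff.trans List.ofFn_inj

theorem editDist_update_le_one (s : Fin n → α) (i : Fin n) (c : α) :
    editDist s (Function.update s i c) ≤ 1 := by
  rw [editDist, List.ofFn_update]
  exact levenshtein_set_le_one _ _ _

theorem subsingleton_setOf_ne_of_editDist_le_one {s v : Fin n → α} (h : editDist s v ≤ 1) :
    {j | s j ≠ v j}.Subsingleton := by
  have hoff : ∃ i : ℕ, ∀ j : Fin n, s j ≠ v j → (j : ℕ) = i := by
    rcases eq_or_eq_set_of_levenshtein_le_one (by simp) h with hsv | ⟨i, c, hsv⟩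
    · exact ⟨0, fun j hj => absurd (congrFun (List.ofFn_injective hsv) j) hj⟩
    · refine ⟨i, fun j hj => by_contra fun hji => hj ?_⟩
      simpa [List.getElem_set, Ne.symm hji] using (congrArg (·[(j : ℕ)]?) hsv).symm
  obtain ⟨i, hi⟩ := hoff
  exact fun j hj k hk => Fin.ext ((hi j hj).trans (hi k hk).symm)

theorem exists_forall_editDist_update_le {s t : Fin n → α} (h : editDist s t ≠ 0) :
    ∃ i, ∀ c, editDist t (Function.update s i c) ≤ editDist t s := by
  obtain ⟨i, hi, hset⟩ := exists_forall_levenshtein_set_le (by simp) h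
  refine ⟨⟨i, by simpa using hi⟩, fun c => ?_⟩
  rw [editDist_comm t, editDist_comm t, editDist, List.ofFn_update]
  exact hset c

end EditDist

theorem IsGuaranteed.exists_update_mem {α : Type*} [Fintype α] [DecidableEq α]
    (hα : 1 < Fintype.card α) {n : ℕ} {B : Set (Fin n → α)} (hB : IsGuaranteed 1 1 B)
    (s : Fin n → α) (i : Fin n) : ∃ c, Function.update s i c ∈ B := by
  obtain ⟨b, hb⟩ := Fintype.exists_ne_of_one_lt_card hα (s i)
  set t := Function.update s i b
  obtain ⟨v, hvB, hsv, htv⟩ := hB s t (editDist_update_le_one s i b)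
  suffices hoff : ∀ j ≠ i, v j = s j from
    ⟨v i, (Function.eq_update_iff.mpr ⟨rfl, hoff⟩) ▸ hvB⟩
  intro j hji
  by_contra hj'
  have hj : s j ≠ v j := Ne.symm hj'
  -- `v` differs from both `s` and `t` at `j ≠ i`, and from one of them at `i` since `s i ≠ t i`.
  have htj : t j ≠ v j := by simpa [t, hji] using hj
  rcases em (s i = v i) with hsi | hsi
  · have hti : t i ≠ v i := by simpa [t, ← hsi] using hb
    exact hji (subsingleton_setOf_ne_of_editDist_le_one htv htj hti)
  · exact hji (subsingleton_setOf_ne_of_editDist_le_one hsv hj hsi)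

theorem stmt14 {α : Type*} [Fintype α] [DecidableEq α] (hα : 1 < Fintype.card α)
    {n : ℕ} (B : Set (Fin n → α)) (hB : IsGuaranteed 1 1 B) :
    ∀ r : ℕ, 1 ≤ r → IsGuaranteed r r B := by
  intro r hr s t hst
  rcases eq_or_ne (editDist s t) 0 with h0 | h0
  · obtain rfl := editDist_eq_zero_iff.mp h0
    obtain ⟨v, hvB, hsv, -⟩ := hB s s (by simp [editDist_self])
    exact ⟨v, hvB, hsv.trans hr, hsv.trans hr⟩
  · obtain ⟨i, hi⟩ := exists_forall_editDist_update_le h0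
    obtain ⟨c, hc⟩ := hB.exists_update_mem hα s i
    refine ⟨_, hc, (editDist_update_le_one s i c).trans hr, ?_⟩
    calc editDist t (Function.update s i c) ≤ editDist t s := hi c
      _ = editDist s t := editDist_comm t s
      _ ≤ r := hst
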